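/- Let G be a weakly closed finite simple graph and let Ḡ denote its complement graph. Then Ḡ contains no induced odd cycle of length 5 or more: for every odd k ≥ 5 there is no graph embedding (injective map preserving both adjacency and non-adjacency) of the cycle graph C_k into Ḡ. -/

import Mathlib

/-!
Fix a weakly closed labelling `σ` and an induced path `a - b - c` of `Gᶜ`. Then `a` and `c`
are adjacent in `G` while `b` is adjacent to neither, so `σ b` cannot lie between `σ a` and
`σ c`: every inner vertex of an induced path of `Gᶜ` is a strict local extremum of `σ`. Along an
induced cycle of `Gᶜ` of length at least four, local maxima and local minima therefore alternate,
which 2-colours the cycle; hence its length is even.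
-/

/-- `G` is weakly closed: some labeling of the vertices by `1, …, n` is such that for
every edge `{i, j}` with `i < j` and every `i < k < j`, `{i,k} ∈ E(G)` or `{k,j} ∈ E(G)`. -/
def WeaklyClosed {V : Type*} [Fintype V] (G : SimpleGraph V) : Prop :=
  ∃ σ : V ≃ Fin (Fintype.card V), ∀ i j k : V,
    G.Adj i j → σ i < σ k → σ k < σ j → G.Adj i k ∨ G.Adj k j

namespace SimpleGraph

variable {V α : Type*} [LinearOrder α]

def IsWeaklyClosedOrder (G : SimpleGraph V) (σ : V → α) : Prop :=
  ∀ i j k : V, G.Adj i j → σ i < σ k → σ k < σ j → G.Adj i k ∨ G.Adj k j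

theorem IsWeaklyClosedOrder.lt_iff_lt {G : SimpleGraph V} {σ : V → α}
    (hσ : G.IsWeaklyClosedOrder σ) (hinj : Function.Injective σ) {a b c : V}
    (hab : Gᶜ.Adj a b) (hbc : Gᶜ.Adj b c) (hac : G.Adj a c) : σ a < σ b ↔ σ c < σ b := by
  rw [compl_adj] at hab hbc
  constructor
  · intro hlt
    refine (hinj.ne hbc.1).symm.lt_of_le (not_lt.mp fun hbc' => ?_)
    rcases hσ a c b hac hlt hbc' with h | h
    · exact hab.2 h
    · exact hbc.2 h
  · intro hlt
    refine (hinj.ne hab.1).lt_of_le (not_lt.mp fun hba => ?_)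
    rcases hσ c a b hac.symm hlt hba with h | h
    · exact hbc.2 h.symm
    · exact hab.2 h.symm

theorem Embedding.adj_of_not_adj_of_ne {W : Type*} {G : SimpleGraph V} {H : SimpleGraph W}
    (f : H ↪g Gᶜ) {a b : W} (hne : a ≠ b) (hab : ¬H.Adj a b) : G.Adj (f a) (f b) := by
  rw [← f.map_adj_iff, compl_adj, not_and, not_not] at hab
  exact hab (f.injective.ne hne)

theorem cycleGraph_adj_add_one {n : ℕ} (i : Fin (n + 2)) : (cycleGraph (n + 2)).Adj i (i + 1) :=
  cycleGraph_adj.mpr (Or.inr (add_sub_cancel_left i 1))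

theorem cycleGraph_adj_add_one_add_two {n : ℕ} (i : Fin (n + 2)) :
    (cycleGraph (n + 2)).Adj (i + 1) (i + 2) := by
  have h := cycleGraph_adj_add_one (i + 1)
  rwa [add_assoc] at h

theorem cycleGraph_not_adj_add_two {n : ℕ} (i : Fin (n + 4)) :
    ¬(cycleGraph (n + 4)).Adj i (i + 2) := by
  rw [cycleGraph_adj, add_sub_cancel_left, sub_add_cancel_left, neg_eq_iff_add_eq_zero]
  simp [Fin.ext_iff, Fin.val_add, Nat.mod_eq_of_lt]

theorem colorable_two_cycleGraph_of_forall_lt_iff {n : ℕ} {g : Fin (n + 2) → α}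
    (hg : Function.Injective g) (hextr : ∀ i, g i < g (i + 1) ↔ g (i + 2) < g (i + 1)) :
    (cycleGraph (n + 2)).Colorable 2 := by
  have hflip (i : Fin (n + 2)) : g (i + 1) < g (i + 1 + 1) ↔ ¬g i < g (i + 1) := by
    have hne : g (i + 1) ≠ g (i + 1 + 1) := hg.ne (left_ne_add.mpr one_ne_zero)
    rw [hextr i, not_lt, ← hne.le_iff_lt, add_assoc]
    rfl -- `1 + 1` and `2` agree definitionally in `Fin (n + 2)`
  let c : (cycleGraph (n + 2)).Coloring Bool :=
    Coloring.mk (fun i => decide (g i < g (i + 1))) fun {u v} huv => by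
      rcases cycleGraph_adj.mp huv with h | h <;>
      · rw [sub_eq_iff_eq_add'] at h
        simp only [h, ne_eq, decide_eq_decide, hflip]
        tauto
  exact c.colorable.mono (by simp)

end SimpleGraph

theorem no_induced_long_odd_cycle_in_compl_of_weaklyClosed {V : Type*} [Fintype V]
    (G : SimpleGraph V) (h : WeaklyClosed G) (m : ℕ) (hm : 5 ≤ m) (hodd : Odd m) :
    IsEmpty (SimpleGraph.cycleGraph m ↪g Gᶜ) := by
  obtain ⟨σ, hσ⟩ := h
  obtain ⟨n, rfl⟩ : ∃ n, m = n + 4 := ⟨m - 4, by omega⟩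
  refine ⟨fun f => ?_⟩
  have hextr (i : Fin (n + 4)) : σ (f i) < σ (f (i + 1)) ↔ σ (f (i + 2)) < σ (f (i + 1)) := by
    have hi : i ≠ i + 2 := by simp [Fin.ext_iff, Nat.mod_eq_of_lt]
    exact SimpleGraph.IsWeaklyClosedOrder.lt_iff_lt hσ σ.injective
      (f.map_adj_iff.mpr (SimpleGraph.cycleGraph_adj_add_one i))
      (f.map_adj_iff.mpr (SimpleGraph.cycleGraph_adj_add_one_add_two i))
      (f.adj_of_not_adj_of_ne hi (SimpleGraph.cycleGraph_not_adj_add_two i))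
  have hcol := SimpleGraph.colorable_two_cycleGraph_of_forall_lt_iff (g := σ ∘ f)
    (σ.injective.comp f.injective) hextr
  have hle := hcol.chromaticNumber_le
  rw [SimpleGraph.chromaticNumber_cycleGraph_of_odd _ (by omega) hodd] at hle
  norm_num at hle
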